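/- arXiv:1412.1193 — 6 statements merged into one kernel-verified Lean document; each statement's English description precedes it below -/
import Mathlib

section
/- Let A, P, Q be real n×n matrices satisfying the continuous algebraic Lyapunov equation Aᵀ P + P A + Q = 0, where P and Q are positive semidefinite and A + Aᵀ is negative definite. Then tr(Q)/(−λ_min(A + Aᵀ)) ≤ tr(P) ≤ tr(Q)/(−λ_max(A + Aᵀ)). -/
/-!
Taking traces in the Lyapunov equation and using `tr (P A) = tr (A P)` gives
`tr Q = -tr ((A + Aᵀ) P)`. Diagonalising `A + Aᵀ = U diag(λ) Uᵀ` turns `tr ((A + Aᵀ) P)` into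
`∑ λᵢ (Uᵀ P U)ᵢᵢ`, a combination of the eigenvalues with the nonnegative weights `(Uᵀ P U)ᵢᵢ`, whose
sum is `tr P`. Hence `λ_min tr P ≤ -tr Q ≤ λ_max tr P`, and negative definiteness of `A + Aᵀ` makes
`λ_min ≤ λ_max < 0`, so both inequalities can be divided by `-λ`.
-/

open Matrix
open scoped ComplexOrder

namespace Matrix

variable {ι 𝕜 R : Type*} [Fintype ι]

lemma trace_add_transpose_mul [CommSemiring R] (A P : Matrix ι ι R) :
    ((A + Aᵀ) * P).trace = (Aᵀ * P + P * A).trace := by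
  rw [add_mul, trace_add, trace_add, trace_mul_comm P A, add_comm]

lemma trace_star_mul_mul_of_mem_unitaryGroup [CommRing R] [StarRing R] [DecidableEq ι]
    {U : Matrix ι ι R} (hU : U ∈ unitaryGroup ι R) (P : Matrix ι ι R) :
    (star U * P * U).trace = P.trace := by
  rw [trace_mul_cycle, Unitary.mul_star_self_of_mem hU, one_mul]

namespace IsHermitian

variable [RCLike 𝕜] [DecidableEq ι] {S : Matrix ι ι 𝕜}

lemma trace_mul_eq_sum_eigenvalues_mul (hS : S.IsHermitian) (P : Matrix ι ι 𝕜) :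
    (S * P).trace = ∑ i, (hS.eigenvalues i : 𝕜) *
      (star (hS.eigenvectorUnitary : Matrix ι ι 𝕜) * P * hS.eigenvectorUnitary) i i := by
  conv_lhs => rw [hS.spectral_theorem, Unitary.conjStarAlgAut_apply]
  rw [mul_assoc, mul_assoc, trace_mul_comm, mul_assoc, trace]
  simp [diagonal_mul]

lemma eigenvalues_neg_of_posDef_neg (hS : S.IsHermitian) (hneg : (-S).PosDef) (i : ι) :
    hS.eigenvalues i < 0 := by
  have hv : (hS.eigenvectorBasis i : ι → 𝕜) ≠ 0 := by
    simpa using hS.eigenvectorBasis.orthonormal.ne_zero i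
  have := hneg.re_dotProduct_pos hv
  rw [hS.eigenvalues_eq]
  simpa [neg_mulVec, dotProduct_neg] using this

lemma re_trace_mul_eq_sum_eigenvalues_mul (hS : S.IsHermitian) (P : Matrix ι ι 𝕜) :
    RCLike.re (S * P).trace = ∑ i, hS.eigenvalues i *
      RCLike.re ((star (hS.eigenvectorUnitary : Matrix ι ι 𝕜) * P * hS.eigenvectorUnitary) i i) := by
  simp only [hS.trace_mul_eq_sum_eigenvalues_mul, map_sum, RCLike.re_ofReal_mul]

lemma iInf_eigenvalues_mul_re_trace_le (hS : S.IsHermitian) {P : Matrix ι ι 𝕜}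
    (hP : P.PosSemidef) :
    (⨅ i, hS.eigenvalues i) * RCLike.re P.trace ≤ RCLike.re (S * P).trace := by
  have hM := hP.conjTranspose_mul_mul_same (hS.eigenvectorUnitary : Matrix ι ι 𝕜)
  rw [hS.re_trace_mul_eq_sum_eigenvalues_mul,
    ← trace_star_mul_mul_of_mem_unitaryGroup hS.eigenvectorUnitary.2 P, trace, map_sum,
    Finset.mul_sum]
  exact Finset.sum_le_sum fun i _ ↦
    mul_le_mul_of_nonneg_right (ciInf_le (Finite.bddBelow_range _) i)
      (RCLike.nonneg_iff.1 hM.diag_nonneg).1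

lemma re_trace_mul_le_iSup_eigenvalues_mul (hS : S.IsHermitian) {P : Matrix ι ι 𝕜}
    (hP : P.PosSemidef) :
    RCLike.re (S * P).trace ≤ (⨆ i, hS.eigenvalues i) * RCLike.re P.trace := by
  have hM := hP.conjTranspose_mul_mul_same (hS.eigenvectorUnitary : Matrix ι ι 𝕜)
  rw [hS.re_trace_mul_eq_sum_eigenvalues_mul,
    ← trace_star_mul_mul_of_mem_unitaryGroup hS.eigenvectorUnitary.2 P, trace, map_sum,
    Finset.mul_sum]
  exact Finset.sum_le_sum fun i _ ↦
    mul_le_mul_of_nonneg_right (le_ciSup (Finite.bddAbove_range _) i)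
      (RCLike.nonneg_iff.1 hM.diag_nonneg).1

end IsHermitian
end Matrix

theorem trace_bounds_of_CALE_general {n : ℕ} (hn : 0 < n)
    (A P Q : Matrix (Fin n) (Fin n) ℝ)
    (hP : P.PosSemidef)
    (hSym : (A + Aᵀ).IsHermitian)
    (hND : (-(A + Aᵀ)).PosDef)
    (heq : Aᵀ * P + P * A + Q = 0) :
    Q.trace / (-(⨅ i, hSym.eigenvalues i)) ≤ P.trace ∧
      P.trace ≤ Q.trace / (-(⨆ i, hSym.eigenvalues i)) := by
  have hQ : Q.trace = -((A + Aᵀ) * P).trace := by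
    rw [trace_add_transpose_mul, eq_neg_iff_add_eq_zero, add_comm, ← trace_add, heq, trace_zero]
  have hneg := hSym.eigenvalues_neg_of_posDef_neg hND
  have hmin : ⨅ i, hSym.eigenvalues i < 0 :=
    (ciInf_le (Finite.bddBelow_range _) ⟨0, hn⟩).trans_lt (hneg _)
  have hmax : ⨆ i, hSym.eigenvalues i < 0 := by
    have : Nonempty (Fin n) := ⟨⟨0, hn⟩⟩
    obtain ⟨j, hj⟩ := exists_eq_ciSup_of_finite (f := hSym.eigenvalues)
    exact hj ▸ hneg j
  have hlow := hSym.iInf_eigenvalues_mul_re_trace_le hP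
  have hup := hSym.re_trace_mul_le_iSup_eigenvalues_mul hP
  simp only [RCLike.re_to_real] at hlow hup
  constructor
  · rw [div_le_iff₀ (neg_pos.2 hmin)]
    linarith
  · rw [le_div_iff₀ (neg_pos.2 hmax)]
    linarith

/-- If `Aᵀ * P + P * A + Q = 0` (a CALE) with `P`, `Q` PSD and `A + Aᵀ`
negative definite, then `tr Q / (-λ_min(A+Aᵀ)) ≤ tr P ≤ tr Q / (-λ_max(A+Aᵀ))`. -/
theorem trace_bounds_of_CALE {n : ℕ} (hn : 0 < n)
    (A P Q : Matrix (Fin n) (Fin n) ℝ)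
    (hP : P.PosSemidef) (hQ : Q.PosSemidef)
    (hSym : (A + Aᵀ).IsHermitian)
    (hND : (-(A + Aᵀ)).PosDef)
    (heq : Aᵀ * P + P * A + Q = 0) :
    Q.trace / (-(⨅ i, hSym.eigenvalues i)) ≤ P.trace ∧
      P.trace ≤ Q.trace / (-(⨆ i, hSym.eigenvalues i)) :=
  trace_bounds_of_CALE_general hn A P Q hP hSym hND heq
end

section
/- Let H and B be symmetric positive definite real n×n matrices and Σ a positive semidefinite real n×n matrix, and suppose λ_min(H^{1/2} B⁻¹ H^{1/2}) > 1/2. If C is an n×n matrix satisfying B⁻¹ H C + C H B⁻¹ − C = B⁻¹ Σ B⁻¹, then tr(H C) = (1/2)·tr( (I − (1/2)·B^{1/2} H⁻¹ B^{1/2})⁻¹ · B^{−1/2} Σ B^{−1/2} ). -/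
/-!
Conjugating by `S = B^{1/2}` turns the equation into `A X + X A - X = Q` with
`A = S⁻¹ H S⁻¹`, `X = S C S`, `Q = S⁻¹ Sg S⁻¹`, and `tr (H C) = tr (A X)`. For `P = A - 1/2`
this is the Sylvester equation `P X + X P = Q`; its trace, before and after multiplication by
`P⁻¹`, gives `2 tr (P X) = tr Q` and `2 tr X = tr (P⁻¹ Q)`, which combine with
`(1 - A⁻¹/2)⁻¹ = 1 + P⁻¹/2` to the claim. `P` is invertible because, with `R = H^{1/2}`,
`A = (S⁻¹ R) (R S⁻¹)` has the same characteristic polynomial as `R B⁻¹ R = (R S⁻¹) (S⁻¹ R)`,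
whose eigenvalues exceed `1/2`.
-/

open Matrix

/-- The square root of a positive semidefinite matrix, as `Matrix.PosSemidef.sqrt` was defined
in the older Mathlib (removed since in favour of `CFC.sqrt`). -/
noncomputable def posSemidefSqrt {n : Type*} [Fintype n] [DecidableEq n]
    {A : Matrix n n ℝ} (hA : A.PosSemidef) : Matrix n n ℝ :=
  (hA.1.eigenvectorUnitary : Matrix n n ℝ) * diagonal ((√·) ∘ hA.1.eigenvalues) *
    (star hA.1.eigenvectorUnitary : Matrix n n ℝ)

section CommRing

variable {n K : Type*} [Fintype n] [DecidableEq n] [CommRing K]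

theorem scalar_eq_smul_one (c : K) : scalar n c = c • (1 : Matrix n n K) := by
  rw [scalar_apply, smul_one_eq_diagonal]

theorem det_mul_sub_smul_one_comm (X Y : Matrix n n K) (c : K) :
    (X * Y - c • 1).det = (Y * X - c • 1).det := by
  rw [← neg_sub (c • 1) (X * Y), ← neg_sub (c • 1) (Y * X), det_neg, det_neg,
    ← scalar_eq_smul_one, ← eval_charpoly, ← eval_charpoly, charpoly_mul_comm]

theorem det_inv_mul_mul_self_mul_inv_sub_smul_one (R S : Matrix n n K) (c : K) :
    (S⁻¹ * (R * R) * S⁻¹ - c • 1).det = (R * (S * S)⁻¹ * R - c • 1).det := by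
  rw [Matrix.mul_inv_rev]
  calc _ = (S⁻¹ * R * (R * S⁻¹) - c • 1).det := by simp only [Matrix.mul_assoc]
    _ = (R * S⁻¹ * (S⁻¹ * R) - c • 1).det := det_mul_sub_smul_one_comm _ _ _
    _ = _ := by simp only [Matrix.mul_assoc]

theorem inv_one_sub_smul_inv {A : Matrix n n K} {c : K} (hA : IsUnit A.det)
    (hP : IsUnit (A - c • 1).det) : (1 - c • A⁻¹)⁻¹ = 1 + c • (A - c • 1)⁻¹ := by
  set P := A - c • 1 with hP_def
  have hA_P : 1 - c • A⁻¹ = A⁻¹ * P := by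
    rw [Matrix.mul_sub, nonsing_inv_mul _ hA, Matrix.mul_smul, Matrix.mul_one]
  have hP_A : 1 + c • P⁻¹ = P⁻¹ * A := by
    rw [show A = P + c • 1 by rw [hP_def]; abel, Matrix.mul_add, nonsing_inv_mul _ hP,
      Matrix.mul_smul, Matrix.mul_one]
  rw [hA_P, hP_A]
  exact inv_eq_right_inv <| by
    rw [Matrix.mul_assoc, mul_nonsing_inv_cancel_left _ _ hP, nonsing_inv_mul _ hA]

variable {P X Q : Matrix n n K}

omit [DecidableEq n] in
theorem two_mul_trace_mul_of_mul_add_mul_eq (h : P * X + X * P = Q) :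
    2 * (P * X).trace = Q.trace := by
  rw [← h, trace_add, trace_mul_comm X P, two_mul]

theorem two_mul_trace_of_mul_add_mul_eq (hP : IsUnit P.det) (h : P * X + X * P = Q) :
    2 * X.trace = (P⁻¹ * Q).trace := by
  rw [← h, Matrix.mul_add, trace_add, nonsing_inv_mul_cancel_left P X hP, ← Matrix.mul_assoc,
    trace_mul_cycle, mul_nonsing_inv P hP, Matrix.one_mul, two_mul]

variable {S B H C Sg : Matrix n n K}

theorem conj_inv_mul_add_mul_inv_sub_eq (hS : IsUnit S.det) (hSS : S * S = B)
    (h : B⁻¹ * H * C + C * H * B⁻¹ - C = B⁻¹ * Sg * B⁻¹) :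
    S⁻¹ * H * S⁻¹ * (S * C * S) + S * C * S * (S⁻¹ * H * S⁻¹) - S * C * S =
      S⁻¹ * Sg * S⁻¹ := by
  have hBinv : B⁻¹ = S⁻¹ * S⁻¹ := by rw [← hSS, Matrix.mul_inv_rev]
  have := congrArg (fun M => S * M * S) h
  simp only [hBinv, Matrix.mul_sub, Matrix.sub_mul, Matrix.mul_add, Matrix.add_mul] at this
  simpa [Matrix.mul_assoc, hS] using this

theorem trace_conj_mul_conj (hS : IsUnit S.det) :
    (S⁻¹ * H * S⁻¹ * (S * C * S)).trace = (H * C).trace := by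
  rw [show S⁻¹ * H * S⁻¹ * (S * C * S) = S⁻¹ * (H * C) * S by simp [Matrix.mul_assoc, hS],
    trace_mul_cycle, mul_nonsing_inv _ hS, Matrix.one_mul]

end CommRing

theorem trace_mul_of_mul_add_mul_sub_eq {n K : Type*} [Fintype n] [DecidableEq n] [Field K]
    [CharZero K] {A X Q : Matrix n n K} (hA : IsUnit A.det)
    (hP : IsUnit (A - (1 / 2 : K) • 1).det) (h : A * X + X * A - X = Q) :
    (A * X).trace = 1 / 2 * ((1 - (1 / 2 : K) • A⁻¹)⁻¹ * Q).trace := by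
  set P := A - (1 / 2 : K) • 1
  have hPX : P * X + X * P = Q := by
    rw [← h]
    simp only [P, Matrix.sub_mul, Matrix.mul_sub, Matrix.smul_mul, Matrix.mul_smul,
      Matrix.one_mul, Matrix.mul_one]
    module
  have hAX : A * X = P * X + (1 / 2 : K) • X := by
    simp only [P, Matrix.sub_mul, Matrix.smul_mul, Matrix.one_mul]
    abel
  have h1 := two_mul_trace_mul_of_mul_add_mul_eq hPX
  have h2 := two_mul_trace_of_mul_add_mul_eq hP hPX
  rw [inv_one_sub_smul_inv hA hP, Matrix.add_mul, Matrix.one_mul, Matrix.smul_mul, trace_add,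
    trace_smul, hAX, trace_add, trace_smul, smul_eq_mul, smul_eq_mul]
  linear_combination (1 / 2 : K) * h1 + 1 / 4 * h2

theorem Matrix.IsHermitian.det_sub_smul_one_ne_zero {n K : Type*} [Fintype n] [DecidableEq n]
    [RCLike K] {T : Matrix n n K} (hT : T.IsHermitian) {c : ℝ}
    (hc : ∀ i, hT.eigenvalues i ≠ c) :
    (T - (c : K) • 1).det ≠ 0 := by
  rw [← neg_sub, det_neg, ← scalar_eq_smul_one, ← eval_charpoly, hT.charpoly_eq,
    Polynomial.eval_prod]
  refine mul_ne_zero (pow_ne_zero _ (neg_ne_zero.mpr one_ne_zero)) ?_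
  exact Finset.prod_ne_zero_iff.mpr fun i _ => by simpa [sub_eq_zero] using (hc i).symm

section posSemidefSqrt

variable {n : Type*} [Fintype n] [DecidableEq n] {A : Matrix n n ℝ}

lemma posSemidefSqrt_mul_self (hA : A.PosSemidef) : posSemidefSqrt hA * posSemidefSqrt hA = A := by
  unfold posSemidefSqrt
  have hUU : (star hA.1.eigenvectorUnitary : Matrix n n ℝ) * hA.1.eigenvectorUnitary = 1 :=
    (mem_unitaryGroup_iff').mp hA.1.eigenvectorUnitary.2
  have hd : (fun i => ((√·) ∘ hA.1.eigenvalues) i * ((√·) ∘ hA.1.eigenvalues) i)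
      = RCLike.ofReal ∘ hA.1.eigenvalues :=
    funext fun i => by simp [Real.mul_self_sqrt (hA.eigenvalues_nonneg i)]
  simp only [Matrix.mul_assoc]
  rw [← Matrix.mul_assoc (star (hA.1.eigenvectorUnitary : Matrix n n ℝ)) _, hUU, Matrix.one_mul,
    ← Matrix.mul_assoc (diagonal _) (diagonal _), diagonal_mul_diagonal, hd, ← Matrix.mul_assoc]
  exact hA.1.spectral_theorem.symm

lemma isUnit_det_posSemidefSqrt (hA : A.PosDef) : IsUnit (posSemidefSqrt hA.posSemidef).det := by
  have h : (posSemidefSqrt hA.posSemidef).det * (posSemidefSqrt hA.posSemidef).det = A.det := by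
    rw [← det_mul, posSemidefSqrt_mul_self]
  exact isUnit_of_mul_isUnit_left (h ▸ hA.det_pos.ne'.isUnit)

end posSemidefSqrt

theorem trace_HC_of_annealed_lyapunov_general {n : ℕ}
    (H B Sg C : Matrix (Fin n) (Fin n) ℝ)
    (hH : H.PosDef) (hB : B.PosDef)
    (hSym : (posSemidefSqrt hH.posSemidef * B⁻¹ * posSemidefSqrt hH.posSemidef).IsHermitian)
    (hmin : 1 / 2 < ⨅ i, hSym.eigenvalues i)
    (heq : B⁻¹ * H * C + C * H * B⁻¹ - C = B⁻¹ * Sg * B⁻¹) :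
    (H * C).trace =
      (1 / 2) *
        (((1 : Matrix (Fin n) (Fin n) ℝ) -
              (1 / 2 : ℝ) • (posSemidefSqrt hB.posSemidef * H⁻¹ * posSemidefSqrt hB.posSemidef))⁻¹ *
            ((posSemidefSqrt hB.posSemidef)⁻¹ * Sg * (posSemidefSqrt hB.posSemidef)⁻¹)).trace := by
  set S := posSemidefSqrt hB.posSemidef
  have hS : IsUnit S.det := isUnit_det_posSemidefSqrt hB
  have hAdet : IsUnit (S⁻¹ * H * S⁻¹).det := by
    simpa [det_mul, hS, hH.det_pos.ne'] using hS
  have hP : IsUnit (S⁻¹ * H * S⁻¹ - (1 / 2 : ℝ) • 1).det := by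
    rw [← posSemidefSqrt_mul_self hH.posSemidef, det_inv_mul_mul_self_mul_inv_sub_smul_one,
      posSemidefSqrt_mul_self hB.posSemidef]
    exact (hSym.det_sub_smul_one_ne_zero fun i =>
      (hmin.trans_le (ciInf_le (Finite.bddBelow_range _) i)).ne').isUnit
  have hAinv : (S⁻¹ * H * S⁻¹)⁻¹ = S * H⁻¹ * S := by
    rw [Matrix.mul_inv_rev, Matrix.mul_inv_rev, nonsing_inv_nonsing_inv _ hS, Matrix.mul_assoc]
  rw [← hAinv, ← trace_conj_mul_conj hS, trace_mul_of_mul_add_mul_sub_eq hAdet hP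
    (conj_inv_mul_add_mul_inv_sub_eq hS (posSemidefSqrt_mul_self _) heq)]

/-- With `H`, `B` symmetric positive definite, `Sg` PSD,
`λ_min(H^{1/2} B⁻¹ H^{1/2}) > 1/2`, and `C` satisfying
`B⁻¹ H C + C H B⁻¹ − C = B⁻¹ Sg B⁻¹`, we have
`tr (H C) = (1/2) tr ((I − (1/2) B^{1/2} H⁻¹ B^{1/2})⁻¹ B^{−1/2} Sg B^{−1/2})`. -/
theorem trace_HC_of_annealed_lyapunov {n : ℕ} (hn : 0 < n)
    (H B Sg C : Matrix (Fin n) (Fin n) ℝ)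
    (hH : H.PosDef) (hB : B.PosDef) (hSg : Sg.PosSemidef)
    (hSym : (posSemidefSqrt hH.posSemidef * B⁻¹ * posSemidefSqrt hH.posSemidef).IsHermitian)
    (hmin : 1 / 2 < ⨅ i, hSym.eigenvalues i)
    (heq : B⁻¹ * H * C + C * H * B⁻¹ - C = B⁻¹ * Sg * B⁻¹) :
    (H * C).trace =
      (1 / 2) *
        (((1 : Matrix (Fin n) (Fin n) ℝ) -
              (1 / 2 : ℝ) • (posSemidefSqrt hB.posSemidef * H⁻¹ * posSemidefSqrt hB.posSemidef))⁻¹ *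
            ((posSemidefSqrt hB.posSemidef)⁻¹ * Sg * (posSemidefSqrt hB.posSemidef)⁻¹)).trace :=
  trace_HC_of_annealed_lyapunov_general H B Sg C hH hB hSym hmin heq
end

section
/- Let H be a symmetric positive definite real n×n matrix, B a symmetric positive definite real n×n matrix, and α a real number. Set C = α H^{1/2} B⁻¹ H^{1/2}, and define the linear operators Φ(X) = X − α(B⁻¹HX + (B⁻¹HX)ᵀ) and Ψ(Y) = Y − (CY + (CY)ᵀ) on n×n matrices. Then for every n×n matrix X and every natural number k, H^{1/2} · Φ^k(X) · H^{1/2} = Ψ^k( H^{1/2} X H^{1/2} ), where Φ^k and Ψ^k denote k-fold iteration. -/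
open Matrix

section

open scoped ComplexOrder

/-- The positive semidefinite square root of a positive semidefinite matrix, as defined in the
older Mathlib (removed since). -/
noncomputable def Matrix.PosSemidef.sqrt {𝕜 : Type*} [RCLike 𝕜] {n : Type*} [Fintype n]
    [DecidableEq n] {A : Matrix n n 𝕜} (hA : A.PosSemidef) : Matrix n n 𝕜 :=
  hA.1.eigenvectorUnitary.1 * diagonal ((↑) ∘ (√·) ∘ hA.1.eigenvalues) *
  (star hA.1.eigenvectorUnitary : Matrix n n 𝕜)

end

/-! The conjugation `X ↦ H^{1/2} X H^{1/2}` intertwines one step of `Φ` with one step of `Ψ`,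
because `B⁻¹ H = B⁻¹ H^{1/2} H^{1/2}` and `H^{1/2}` is symmetric; iterating the intertwining
relation gives the claim for every `k`. -/

namespace Matrix.PosSemidef

open scoped MatrixOrder ComplexOrder

variable {𝕜 n : Type*} [RCLike 𝕜] [Fintype n] [DecidableEq n] {A : Matrix n n 𝕜}

theorem sqrt_eq_cfcSqrt (hA : A.PosSemidef) : hA.sqrt = CFC.sqrt A := by
  rw [CFC.sqrt_eq_cfc, cfc_nnreal_eq_real _ A hA.nonneg, hA.1.cfc_eq]
  simp only [sqrt, IsHermitian.cfc, Unitary.conjStarAlgAut_apply, Real.sqrt]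

theorem sqrt_mul_sqrt (hA : A.PosSemidef) : hA.sqrt * hA.sqrt = A := by
  rw [sqrt_eq_cfcSqrt, CFC.sqrt_mul_sqrt_self A hA.nonneg]

theorem isHermitian_sqrt (hA : A.PosSemidef) : hA.sqrt.IsHermitian := by
  rw [sqrt_eq_cfcSqrt]
  exact (CFC.sqrt_nonneg A).isSelfAdjoint

end Matrix.PosSemidef

theorem Matrix.semiconj_conj_sub_smul_add_transpose {R n : Type*} [CommRing R] [Fintype n]
    {S H : Matrix n n R} (hS : S.IsSymm) (hSS : S * S = H) (M : Matrix n n R) (α : R) :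
    Function.Semiconj (fun X => S * X * S)
      (fun X => X - α • (M * H * X + (M * H * X)ᵀ))
      (fun Y => Y - ((α • (S * M * S)) * Y + ((α • (S * M * S)) * Y)ᵀ)) := by
  subst hSS
  intro X
  simp only [transpose_mul, transpose_smul, hS.eq, Matrix.mul_sub, Matrix.sub_mul,
    Matrix.mul_add, Matrix.add_mul, Matrix.mul_smul, Matrix.smul_mul, smul_add, Matrix.mul_assoc]

theorem sqrt_conjugation_of_iterates_general {n : ℕ} (H B : Matrix (Fin n) (Fin n) ℝ) (α : ℝ)
    (hH : H.PosDef) :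
    ∀ (X : Matrix (Fin n) (Fin n) ℝ) (k : ℕ),
      hH.posSemidef.sqrt *
          ((fun Y => Y - α • (B⁻¹ * H * Y + (B⁻¹ * H * Y)ᵀ))^[k] X) * hH.posSemidef.sqrt
        = (fun Y =>
              Y - ((α • (hH.posSemidef.sqrt * B⁻¹ * hH.posSemidef.sqrt)) * Y +
                ((α • (hH.posSemidef.sqrt * B⁻¹ * hH.posSemidef.sqrt)) * Y)ᵀ))^[k]
            (hH.posSemidef.sqrt * X * hH.posSemidef.sqrt) := by
  intro X k
  have hS : hH.posSemidef.sqrt.IsSymm :=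
    isHermitian_iff_isSymm.mp hH.posSemidef.isHermitian_sqrt
  have hstep := semiconj_conj_sub_smul_add_transpose hS hH.posSemidef.sqrt_mul_sqrt B⁻¹ α
  exact hstep.iterate_right k X

/-- With `H`, `B` symmetric positive definite, `C = α H^{1/2} B⁻¹ H^{1/2}`,
`Φ(X) = X − α(B⁻¹HX + (B⁻¹HX)ᵀ)` and `Ψ(Y) = Y − (CY + (CY)ᵀ)`, we have
`H^{1/2} Φ^k(X) H^{1/2} = Ψ^k (H^{1/2} X H^{1/2})` for all `X` and `k`. -/
theorem sqrt_conjugation_of_iterates {n : ℕ} (H B : Matrix (Fin n) (Fin n) ℝ) (α : ℝ)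
    (hH : H.PosDef) (hB : B.PosDef) :
    ∀ (X : Matrix (Fin n) (Fin n) ℝ) (k : ℕ),
      hH.posSemidef.sqrt *
          ((fun Y => Y - α • (B⁻¹ * H * Y + (B⁻¹ * H * Y)ᵀ))^[k] X) * hH.posSemidef.sqrt
        = (fun Y =>
              Y - ((α • (hH.posSemidef.sqrt * B⁻¹ * hH.posSemidef.sqrt)) * Y +
                ((α • (hH.posSemidef.sqrt * B⁻¹ * hH.posSemidef.sqrt)) * Y)ᵀ))^[k]
            (hH.posSemidef.sqrt * X * hH.posSemidef.sqrt) :=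
  sqrt_conjugation_of_iterates_general H B α hH
end

section
/- Let H and B be symmetric positive definite real n×n matrices, Σ a positive semidefinite real n×n matrix, θ₀, θ* ∈ ℝⁿ, and α > 0 with 2α·λ₁ < 1, where λ₁ ≥ ... ≥ λ_n denote the eigenvalues of H^{1/2}B⁻¹H^{1/2}. Set h(θ) = ½(θ−θ*)ᵀH(θ−θ*), Δ₀ = θ₀ − θ*, let Φ(X) = X − α(B⁻¹HX + (B⁻¹HX)ᵀ), let V_∞ be a matrix satisfying B⁻¹HV_∞ + V_∞HB⁻¹ = αB⁻¹ΣB⁻¹, and for k ≥ 0 define V_k = V_∞ − Φ^k(V_∞) + Φ^k(Δ₀Δ₀ᵀ) and m_k = θ* + (I − αB⁻¹H)^k Δ₀. Then, with ε₁ = αλ₁ and ε₂ = αλ_n, L(k) ≤ ½tr(H V_k) + ½tr(H (m_k−θ*)(m_k−θ*)ᵀ) ≤ U(k), where U(k) = [1−(1−2ε₁)^k]·(α/4)tr(B⁻¹Σ) + (1−2ε₂)^k h(θ₀) + (1−ε₂)^{2k} h(θ₀) and L(k) = [1−(1−2ε₂)^k]·(α/4)tr(B⁻¹Σ) + (1−2ε₁)^k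 h(θ₀) + (1−ε₁)^{2k} h(θ₀). -/
/-!
Put `P = H^{1/2} U`, where `H^{1/2} B⁻¹ H^{1/2} = U diag(λ) Uᵀ` with `U` orthogonal, so that
`H = P Pᵀ` and `Pᵀ B⁻¹ P = diag(λ)`. In the coordinates `X ↦ Pᵀ X P` one has
`tr (H X) = tr (Pᵀ X P)`, the map `Φ` multiplies the `i`-th diagonal entry by `1 - 2αλᵢ`, and the
mean error contracts coordinatewise by `1 - αλᵢ`. Hence the objective is
`½ ∑ᵢ [(1 - (1 - 2αλᵢ)^k) zᵢ + ((1 - 2αλᵢ)^k + (1 - αλᵢ)^{2k}) yᵢ]`, where `zᵢ ≥ 0` are the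
diagonal entries of `Pᵀ V∞ P` (nonnegative by the Lyapunov equation), `yᵢ = (Pᵀ Δ₀)ᵢ²`,
`∑ zᵢ = (α/2) tr (B⁻¹Σ)` and `∑ yᵢ = 2 h(θ₀)`. Each coefficient is monotone in `αλᵢ ∈ [ε₂, ε₁]`
as long as `2ε₁ ≤ 1`.
-/

open Matrix

namespace Matrix

variable {ι R : Type*} [Fintype ι]

section CommRing

variable [CommRing R] {H K P : Matrix ι ι R}

lemma trace_mul_eq_trace_transpose_mul_mul (hP : P * Pᵀ = H) (X : Matrix ι ι R) :
    (H * X).trace = (Pᵀ * X * P).trace := by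
  rw [← hP, Matrix.mul_assoc, trace_mul_comm, Matrix.mul_assoc]

lemma transpose_mul_vecMulVec_mul (P : Matrix ι ι R) (u : ι → R) :
    Pᵀ * vecMulVec u u * P = vecMulVec (Pᵀ *ᵥ u) (Pᵀ *ᵥ u) := by
  rw [mul_vecMulVec, vecMulVec_mul, mulVec_transpose]

lemma dotProduct_mulVec_eq_sum_sq (hP : P * Pᵀ = H) (u : ι → R) :
    u ⬝ᵥ H *ᵥ u = ∑ i, (Pᵀ *ᵥ u) i ^ 2 := by
  rw [← hP, ← mulVec_mulVec, dotProduct_mulVec, ← mulVec_transpose]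
  simp only [dotProduct, sq]

variable [DecidableEq ι] {d : ι → R}

lemma trace_mul_of_lyapunov {B V C : Matrix ι ι R} {α : R} (hB : IsUnit B.det)
    (hV : B⁻¹ * H * V + V * H * B⁻¹ = α • (B⁻¹ * C * B⁻¹)) :
    2 * (H * V).trace = α * (B⁻¹ * C).trace := by
  have h := congrArg (fun X => (B * X).trace) hV
  simp only [Matrix.mul_add, trace_add, Matrix.mul_smul, trace_smul, smul_eq_mul,
    ← Matrix.mul_assoc, mul_nonsing_inv B hB, Matrix.one_mul] at h
  rw [trace_mul_comm (B * V * H), Matrix.mul_assoc B, ← Matrix.mul_assoc B⁻¹,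
    nonsing_inv_mul B hB, Matrix.one_mul, trace_mul_comm V, trace_mul_comm C] at h
  linear_combination h

lemma transpose_mul_mul_mul_eq_diagonal_mul (hP : P * Pᵀ = H) (hd : Pᵀ * K * P = diagonal d)
    (X : Matrix ι ι R) : Pᵀ * (K * H * X) * P = diagonal d * (Pᵀ * X * P) := by
  rw [← hd, ← hP]
  simp only [Matrix.mul_assoc]

lemma transpose_mul_mul_mul_eq_mul_diagonal (hP : P * Pᵀ = H) (hd : Pᵀ * K * P = diagonal d)
    (X : Matrix ι ι R) : Pᵀ * (X * H * K) * P = (Pᵀ * X * P) * diagonal d := by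
  rw [← hd, ← hP]
  simp only [Matrix.mul_assoc]

lemma transpose_mul_mul_apply_self_of_lyapunov {α : R} {V C : Matrix ι ι R}
    (hP : P * Pᵀ = H) (hd : Pᵀ * K * P = diagonal d)
    (hV : K * H * V + V * H * K = α • C) (i : ι) :
    2 * d i * (Pᵀ * V * P) i i = α * (Pᵀ * C * P) i i := by
  have h := congrArg (fun X => (Pᵀ * X * P) i i) hV
  simp only [Matrix.mul_add, Matrix.add_mul, Matrix.mul_smul, Matrix.smul_mul,
    transpose_mul_mul_mul_eq_diagonal_mul hP hd, transpose_mul_mul_mul_eq_mul_diagonal hP hd,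
    add_apply, smul_apply, diagonal_mul, mul_diagonal, smul_eq_mul] at h
  linear_combination h

def covStep (α : R) (A X : Matrix ι ι R) : Matrix ι ι R := X - α • (A * X + (A * X)ᵀ)

lemma transpose_mul_covStep_mul_apply_self (hP : P * Pᵀ = H) (hd : Pᵀ * K * P = diagonal d)
    (α : R) (X : Matrix ι ι R) (i : ι) :
    (Pᵀ * covStep α (K * H) X * P) i i = (1 - 2 * α * d i) * (Pᵀ * X * P) i i := by
  have hT : Pᵀ * (K * H * X)ᵀ * P = (Pᵀ * (K * H * X) * P)ᵀ := by
    simp only [transpose_mul, transpose_transpose, Matrix.mul_assoc]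
  simp only [covStep, Matrix.mul_sub, Matrix.sub_mul, Matrix.mul_smul, Matrix.smul_mul,
    Matrix.mul_add, Matrix.add_mul, hT, transpose_mul_mul_mul_eq_diagonal_mul hP hd, sub_apply,
    smul_apply, add_apply, transpose_apply, diagonal_mul, smul_eq_mul]
  ring

lemma transpose_mul_iterate_covStep_mul_apply_self (hP : P * Pᵀ = H)
    (hd : Pᵀ * K * P = diagonal d) (α : R) (k : ℕ) (X : Matrix ι ι R) (i : ι) :
    (Pᵀ * (covStep α (K * H))^[k] X * P) i i = (1 - 2 * α * d i) ^ k * (Pᵀ * X * P) i i := by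
  induction k with
  | zero => simp
  | succ k ih =>
    rw [Function.iterate_succ_apply', transpose_mul_covStep_mul_apply_self hP hd, ih, pow_succ]
    ring

lemma transpose_mul_pow (hP : P * Pᵀ = H) (hd : Pᵀ * K * P = diagonal d) (α : R) (k : ℕ) :
    Pᵀ * (1 - α • (K * H)) ^ k = diagonal (fun i => (1 - α * d i) ^ k) * Pᵀ := by
  have hstep : Pᵀ * (1 - α • (K * H)) = diagonal (fun i => 1 - α * d i) * Pᵀ := by
    rw [← hP, Matrix.mul_sub, Matrix.mul_one, Matrix.mul_smul, ← Matrix.mul_assoc,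
      ← Matrix.mul_assoc, hd]
    ext i j
    simp only [sub_apply, smul_apply, diagonal_mul, smul_eq_mul]
    ring
  induction k with
  | zero => simp
  | succ k ih =>
    rw [pow_succ, ← Matrix.mul_assoc, ih, Matrix.mul_assoc, hstep, ← Matrix.mul_assoc,
      diagonal_mul_diagonal]
    simp only [pow_succ]

lemma trace_mul_cov_add_trace_mul_mean_eq_sum (hP : P * Pᵀ = H)
    (hd : Pᵀ * K * P = diagonal d) (α : R) (k : ℕ) (V : Matrix ι ι R) (u : ι → R) :
    (H * (V - (covStep α (K * H))^[k] V + (covStep α (K * H))^[k] (vecMulVec u u))).trace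
      + (H * vecMulVec ((1 - α • (K * H)) ^ k *ᵥ u) ((1 - α • (K * H)) ^ k *ᵥ u)).trace
      = ∑ i, ((1 - (1 - 2 * (α * d i)) ^ k) * (Pᵀ * V * P) i i
        + (1 - 2 * (α * d i)) ^ k * (Pᵀ *ᵥ u) i ^ 2
        + (1 - α * d i) ^ (2 * k) * (Pᵀ *ᵥ u) i ^ 2) := by
  have hmean : Pᵀ *ᵥ ((1 - α • (K * H)) ^ k *ᵥ u)
      = diagonal (fun i => (1 - α * d i) ^ k) *ᵥ (Pᵀ *ᵥ u) := by
    rw [mulVec_mulVec, transpose_mul_pow hP hd, mulVec_mulVec]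
  rw [Matrix.mul_add, Matrix.mul_sub, trace_add, trace_sub]
  simp only [trace_mul_eq_trace_transpose_mul_mul hP, transpose_mul_vecMulVec_mul, hmean]
  simp only [trace, diag_apply, transpose_mul_iterate_covStep_mul_apply_self hP hd,
    transpose_mul_vecMulVec_mul, vecMulVec_apply, mulVec_diagonal, ← Finset.sum_sub_distrib,
    ← Finset.sum_add_distrib]
  exact Finset.sum_congr rfl fun i _ => by ring

end CommRing

variable [DecidableEq ι]

lemma IsHermitian.eigenvectorUnitary_mul_diagonal_sqrt_mul_star {A : Matrix ι ι ℝ}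
    (hA : A.IsHermitian) :
    (hA.eigenvectorUnitary : Matrix ι ι ℝ) * diagonal (fun i => (hA.eigenvalues i).sqrt) *
      (star hA.eigenvectorUnitary : Matrix ι ι ℝ) = cfc Real.sqrt A := by
  rw [hA.cfc_eq, IsHermitian.cfc, Unitary.conjStarAlgAut_apply]
  rfl

lemma PosSemidef.cfc_sqrt_mul_self {A : Matrix ι ι ℝ} (hA : A.PosSemidef) :
    cfc Real.sqrt A * cfc Real.sqrt A = A := by
  rw [← cfc_mul Real.sqrt Real.sqrt A]
  conv_rhs => rw [← cfc_id' ℝ A hA.1]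
  exact cfc_congr fun x hx =>
    Real.mul_self_sqrt ((posSemidef_iff_isHermitian_and_spectrum_nonneg.1 hA).2 hx)

lemma transpose_cfc (f : ℝ → ℝ) (A : Matrix ι ι ℝ) : (cfc f A)ᵀ = cfc f A :=
  cfc_predicate f A

/-- The witness is `P = S U`, where `U` diagonalises `S K S`. -/
lemma exists_mul_transpose_eq_and_transpose_mul_mul_eq_diagonal {H K S : Matrix ι ι ℝ}
    (hSS : S * S = H) (hSt : Sᵀ = S) (hM : (S * K * S).IsHermitian) :
    ∃ P : Matrix ι ι ℝ, P * Pᵀ = H ∧ Pᵀ * K * P = diagonal hM.eigenvalues := by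
  have hdiag := hM.conjStarAlgAut_star_eigenvectorUnitary
  rw [Unitary.conjStarAlgAut_star_apply, RCLike.ofReal_real_eq_id, Function.id_comp] at hdiag
  set U := hM.eigenvectorUnitary
  have hUt : (U : Matrix ι ι ℝ)ᵀ = star (U : Matrix ι ι ℝ) :=
    (conjTranspose_eq_transpose_of_trivial _).symm
  refine ⟨S * U, ?_, ?_⟩
  · rw [transpose_mul, hSt, hUt, Matrix.mul_assoc, ← Matrix.mul_assoc (U : Matrix ι ι ℝ),
      Unitary.mul_star_self_of_mem U.2, Matrix.one_mul, hSS]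
  · rw [transpose_mul, hSt, hUt, ← hdiag]
    simp only [Matrix.mul_assoc]

variable {H K P : Matrix ι ι ℝ} {d : ι → ℝ}

lemma pos_of_transpose_mul_mul_eq_diagonal (hH : IsUnit H) (hK : K.PosDef)
    (hP : P * Pᵀ = H) (hd : Pᵀ * K * P = diagonal d) (i : ι) : 0 < d i := by
  have hPinj : Function.Injective P.mulVec :=
    mulVec_injective_iff_isUnit.2 (isUnit_of_mul_isUnit_left (hP ▸ hH))
  have hPKP := hK.conjTranspose_mul_mul_same hPinj
  rw [conjTranspose_eq_transpose_of_trivial, hd] at hPKP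
  simpa using hPKP.diag_pos (i := i)

lemma transpose_mul_mul_apply_self_nonneg_of_lyapunov {α : ℝ} {V C : Matrix ι ι ℝ}
    (hP : P * Pᵀ = H) (hd : Pᵀ * K * P = diagonal d)
    (hV : K * H * V + V * H * K = α • C) (hC : C.PosSemidef) (hα : 0 ≤ α) {i : ι}
    (hdi : 0 < d i) : 0 ≤ (Pᵀ * V * P) i i := by
  have hPCP : (Pᵀ * C * P).PosSemidef := by
    simpa only [conjTranspose_eq_transpose_of_trivial] using hC.conjTranspose_mul_mul_same P
  have h : 0 ≤ 2 * d i * (Pᵀ * V * P) i i :=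
    transpose_mul_mul_apply_self_of_lyapunov hP hd hV i ▸ mul_nonneg hα hPCP.diag_nonneg
  exact (mul_nonneg_iff_of_pos_left (by positivity)).1 h

end Matrix

lemma sum_bounds_of_mem_Icc {ι : Type*} [Fintype ι] {c z y : ι → ℝ} {a b : ℝ} (k : ℕ)
    (hz : ∀ i, 0 ≤ z i) (hy : ∀ i, 0 ≤ y i) (hc : ∀ i, c i ∈ Set.Icc a b) (hb : 2 * b ≤ 1) :
    (1 - (1 - 2 * a) ^ k) * ∑ i, z i + (1 - 2 * b) ^ k * ∑ i, y i
        + (1 - b) ^ (2 * k) * ∑ i, y i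
      ≤ ∑ i, ((1 - (1 - 2 * c i) ^ k) * z i + (1 - 2 * c i) ^ k * y i
        + (1 - c i) ^ (2 * k) * y i)
    ∧ ∑ i, ((1 - (1 - 2 * c i) ^ k) * z i + (1 - 2 * c i) ^ k * y i
        + (1 - c i) ^ (2 * k) * y i)
      ≤ (1 - (1 - 2 * b) ^ k) * ∑ i, z i + (1 - 2 * a) ^ k * ∑ i, y i
        + (1 - a) ^ (2 * k) * ∑ i, y i := by
  simp only [Finset.mul_sum, ← Finset.sum_add_distrib]
  constructor <;> refine Finset.sum_le_sum fun i _ => ?_ <;>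
  · have := hz i
    have := hy i
    obtain ⟨hac, hcb⟩ := hc i
    gcongr <;> linarith

theorem expected_objective_bounds_const_lr_general {n : ℕ}
    (H B Sg Vinf : Matrix (Fin n) (Fin n) ℝ)
    (θ0 θs : Fin n → ℝ) (α : ℝ) (hα : 0 < α)
    (hH : H.PosDef) (hB : B.PosDef) (hSg : Sg.PosSemidef)
    (hSym : (((hH.posSemidef.1.eigenvectorUnitary : Matrix (Fin n) (Fin n) ℝ) * diagonal (fun i => (hH.posSemidef.1.eigenvalues i).sqrt) * (star hH.posSemidef.1.eigenvectorUnitary : Matrix (Fin n) (Fin n) ℝ)) * B⁻¹ * ((hH.posSemidef.1.eigenvectorUnitary : Matrix (Fin n) (Fin n) ℝ) * diagonal (fun i => (hH.posSemidef.1.eigenvalues i).sqrt) * (star hH.posSemidef.1.eigenvectorUnitary : Matrix (Fin n) (Fin n) ℝ))).IsHermitian)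
    (hlr : 2 * α * (⨆ i, hSym.eigenvalues i) < 1)
    (hV : B⁻¹ * H * Vinf + Vinf * H * B⁻¹ = α • (B⁻¹ * Sg * B⁻¹))
    (k : ℕ) :
    let Δ0 : Fin n → ℝ := θ0 - θs
    let Φ : Matrix (Fin n) (Fin n) ℝ → Matrix (Fin n) (Fin n) ℝ :=
      fun X => X - α • (B⁻¹ * H * X + (B⁻¹ * H * X)ᵀ)
    let Vk : Matrix (Fin n) (Fin n) ℝ :=
      Vinf - Φ^[k] Vinf + Φ^[k] (Matrix.vecMulVec Δ0 Δ0)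
    let mk : Fin n → ℝ := θs + ((1 - α • (B⁻¹ * H)) ^ k).mulVec Δ0
    let h0 : ℝ := (1 / 2) * (Δ0 ⬝ᵥ H.mulVec Δ0)
    let ε1 : ℝ := α * (⨆ i, hSym.eigenvalues i)
    let ε2 : ℝ := α * (⨅ i, hSym.eigenvalues i)
    let E : ℝ := (1 / 2) * (H * Vk).trace +
      (1 / 2) * (H * Matrix.vecMulVec (mk - θs) (mk - θs)).trace
    ((1 - (1 - 2 * ε2) ^ k) * (α / 4) * (B⁻¹ * Sg).trace
        + (1 - 2 * ε1) ^ k * h0 + (1 - ε1) ^ (2 * k) * h0 ≤ E)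
    ∧ (E ≤ (1 - (1 - 2 * ε1) ^ k) * (α / 4) * (B⁻¹ * Sg).trace
        + (1 - 2 * ε2) ^ k * h0 + (1 - ε2) ^ (2 * k) * h0) := by
  intro Δ0 Φ Vk mk h0 ε1 ε2 E
  obtain ⟨P, hPH, hPK⟩ := exists_mul_transpose_eq_and_transpose_mul_mul_eq_diagonal (H := H)
    (by rw [IsHermitian.eigenvectorUnitary_mul_diagonal_sqrt_mul_star]
        exact hH.posSemidef.cfc_sqrt_mul_self)
    (by rw [IsHermitian.eigenvectorUnitary_mul_diagonal_sqrt_mul_star]; exact transpose_cfc _ _)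
    hSym
  set lam := hSym.eigenvalues
  set z : Fin n → ℝ := fun i => (Pᵀ * Vinf * P) i i
  set y : Fin n → ℝ := fun i => (Pᵀ *ᵥ Δ0) i ^ 2
  have hE : E = 1 / 2 * ∑ i, ((1 - (1 - 2 * (α * lam i)) ^ k) * z i
      + (1 - 2 * (α * lam i)) ^ k * y i + (1 - α * lam i) ^ (2 * k) * y i) := by
    have h := trace_mul_cov_add_trace_mul_mean_eq_sum hPH hPK α k Vinf Δ0
    rw [← show mk - θs = (1 - α • (B⁻¹ * H)) ^ k *ᵥ Δ0 from add_sub_cancel_left _ _] at h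
    exact (mul_add _ _ _).symm.trans (congrArg _ h)
  have htr : 2 * ∑ i, z i = α * (B⁻¹ * Sg).trace := by
    rw [← trace_mul_of_lyapunov hB.det_pos.ne'.isUnit hV,
      trace_mul_eq_trace_transpose_mul_mul hPH]
    rfl
  have hh0 : h0 = 1 / 2 * ∑ i, y i := congrArg _ (dotProduct_mulVec_eq_sum_sq hPH Δ0)
  have hC : (B⁻¹ * Sg * B⁻¹).PosSemidef := by
    simpa only [hB.inv.1.eq] using hSg.conjTranspose_mul_mul_same B⁻¹
  have hz : ∀ i, 0 ≤ z i := fun i => transpose_mul_mul_apply_self_nonneg_of_lyapunov hPH hPK hV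
    hC hα.le (pos_of_transpose_mul_mul_eq_diagonal hH.isUnit hB.inv hPH hPK i)
  have hc : ∀ i, α * lam i ∈ Set.Icc ε2 ε1 := fun i =>
    ⟨mul_le_mul_of_nonneg_left (ciInf_le (Finite.bddBelow_range _) i) hα.le,
      mul_le_mul_of_nonneg_left (le_ciSup (Finite.bddAbove_range _) i) hα.le⟩
  obtain ⟨hlo, hhi⟩ :=
    sum_bounds_of_mem_Icc (y := y) k hz (fun i => sq_nonneg _) hc (by linarith)
  rw [hE, hh0]
  constructor
  · linear_combination (1 / 2) * hlo - (1 - (1 - 2 * ε2) ^ k) / 4 * htr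
  · linear_combination (1 / 2) * hhi + (1 - (1 - 2 * ε1) ^ k) / 4 * htr

/-- Bounds on `E[h(θ_k)] − h(θ*)` for the constant-learning-rate stochastic
iteration on a quadratic, in terms of `ε₁ = α λ₁` and `ε₂ = α λ_n`, where `λ₁`, `λ_n` are the
largest and smallest eigenvalues of `H^{1/2} B⁻¹ H^{1/2}`. -/
theorem expected_objective_bounds_const_lr {n : ℕ} (hn : 0 < n)
    (H B Sg Vinf : Matrix (Fin n) (Fin n) ℝ)
    (θ0 θs : Fin n → ℝ) (α : ℝ) (hα : 0 < α)
    (hH : H.PosDef) (hB : B.PosDef) (hSg : Sg.PosSemidef)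
    (hSym : (((hH.posSemidef.1.eigenvectorUnitary : Matrix (Fin n) (Fin n) ℝ) * diagonal (fun i => (hH.posSemidef.1.eigenvalues i).sqrt) * (star hH.posSemidef.1.eigenvectorUnitary : Matrix (Fin n) (Fin n) ℝ)) * B⁻¹ * ((hH.posSemidef.1.eigenvectorUnitary : Matrix (Fin n) (Fin n) ℝ) * diagonal (fun i => (hH.posSemidef.1.eigenvalues i).sqrt) * (star hH.posSemidef.1.eigenvectorUnitary : Matrix (Fin n) (Fin n) ℝ))).IsHermitian)
    (hlr : 2 * α * (⨆ i, hSym.eigenvalues i) < 1)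
    (hV : B⁻¹ * H * Vinf + Vinf * H * B⁻¹ = α • (B⁻¹ * Sg * B⁻¹))
    (k : ℕ) :
    let Δ0 : Fin n → ℝ := θ0 - θs
    let Φ : Matrix (Fin n) (Fin n) ℝ → Matrix (Fin n) (Fin n) ℝ :=
      fun X => X - α • (B⁻¹ * H * X + (B⁻¹ * H * X)ᵀ)
    let Vk : Matrix (Fin n) (Fin n) ℝ :=
      Vinf - Φ^[k] Vinf + Φ^[k] (Matrix.vecMulVec Δ0 Δ0)
    let mk : Fin n → ℝ := θs + ((1 - α • (B⁻¹ * H)) ^ k).mulVec Δ0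
    let h0 : ℝ := (1 / 2) * (Δ0 ⬝ᵥ H.mulVec Δ0)
    let ε1 : ℝ := α * (⨆ i, hSym.eigenvalues i)
    let ε2 : ℝ := α * (⨅ i, hSym.eigenvalues i)
    let E : ℝ := (1 / 2) * (H * Vk).trace +
      (1 / 2) * (H * Matrix.vecMulVec (mk - θs) (mk - θs)).trace
    ((1 - (1 - 2 * ε2) ^ k) * (α / 4) * (B⁻¹ * Sg).trace
        + (1 - 2 * ε1) ^ k * h0 + (1 - ε1) ^ (2 * k) * h0 ≤ E)
    ∧ (E ≤ (1 - (1 - 2 * ε1) ^ k) * (α / 4) * (B⁻¹ * Sg).trace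
        + (1 - 2 * ε2) ^ k * h0 + (1 - ε2) ^ (2 * k) * h0) :=
  expected_objective_bounds_const_lr_general H B Sg Vinf θ0 θs α hα hH hB hSg hSym hlr hV k
end

section
/- Let ζ : ℝⁿ → ℝⁿ be affine, ζ(γ) = Mγ + b with M an invertible n×n matrix. Let g ∈ ℝⁿ, B_θ an invertible n×n matrix, B_γ = Mᵀ B_θ M, and α ∈ ℝ. Then ζ( γ − α B_γ⁻¹ (Mᵀ g) ) = ζ(γ) − α B_θ⁻¹ g; that is, for an affine reparameterization, one preconditioned-gradient update in γ-space mapped through ζ coincides exactly with the corresponding preconditioned-gradient update in θ-space. -/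
open Matrix

/-- For an affine reparameterization `ζ(γ) = Mγ + b` with `M` invertible and
`B_γ = Mᵀ B_θ M`, one preconditioned-gradient update in γ-space mapped through `ζ`
coincides exactly with the corresponding update in θ-space. -/
theorem affine_reparameterization_invariance {n : ℕ}
    (M Bθ : Matrix (Fin n) (Fin n) ℝ) (b : Fin n → ℝ)
    (hM : IsUnit M.det) (hBθ : IsUnit Bθ.det) (g : Fin n → ℝ) (α : ℝ) :
    let ζ : (Fin n → ℝ) → (Fin n → ℝ) := fun γ => M.mulVec γ + b
    let Bγ : Matrix (Fin n) (Fin n) ℝ := Mᵀ * Bθ * M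
    ∀ γ : Fin n → ℝ,
      ζ (γ - α • Bγ⁻¹.mulVec (Mᵀ.mulVec g)) = ζ γ - α • Bθ⁻¹.mulVec g := by
  intro ζ Bγ γ
  have hMT : IsUnit Mᵀ.det := by rwa [Matrix.det_transpose]
  have hkey : M * Bγ⁻¹ * Mᵀ = Bθ⁻¹ := by
    show M * (Mᵀ * Bθ * M)⁻¹ * Mᵀ = Bθ⁻¹
    rw [Matrix.mul_inv_rev, Matrix.mul_inv_rev, ← Matrix.mul_assoc, ← Matrix.mul_assoc,
      Matrix.mul_nonsing_inv M hM, Matrix.one_mul, Matrix.mul_assoc,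
      Matrix.nonsing_inv_mul Mᵀ hMT, Matrix.mul_one]
  show M.mulVec (γ - α • Bγ⁻¹.mulVec (Mᵀ.mulVec g)) + b = (M.mulVec γ + b) - α • Bθ⁻¹.mulVec g
  rw [Matrix.mulVec_sub, Matrix.mulVec_smul,
    Matrix.mulVec_mulVec, Matrix.mulVec_mulVec, hkey]
  abel
end

section
/- Let α > 0 and let (θ_k)_{k≥0} be a sequence of real numbers with θ_k ≠ 0 for all k, satisfying θ_{k+1} = θ_k − α/θ_k for all k. Then the sequence (θ_k) does not converge to 0. -/
/-- The empirical-Fisher-preconditioned iteration `θ_{k+1} = θ_k − α/θ_k`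
(with fixed `α > 0` and all iterates nonzero) cannot converge to `0`. -/
theorem empirical_fisher_iteration_not_tendsto_zero (α : ℝ) (hα : 0 < α)
    (θ : ℕ → ℝ) (hne : ∀ k, θ k ≠ 0) (hrec : ∀ k, θ (k + 1) = θ k - α / θ k) :
    ¬ Filter.Tendsto θ Filter.atTop (nhds 0) := by
  intro h
  set ε := Real.sqrt (α / 2) with hεdef
  have hε : 0 < ε := Real.sqrt_pos.mpr (by linarith)
  have hε2 : ε ^ 2 = α / 2 := Real.sq_sqrt (by linarith)
  have := Metric.tendsto_atTop.mp h ε hε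
  obtain ⟨N, hN⟩ := this
  have h1 : |θ N| < ε := by simpa [Real.dist_eq] using hN N le_rfl
  have h2 : |θ (N + 1)| < ε := by simpa [Real.dist_eq] using hN (N + 1) (by omega)
  have hθN : 0 < |θ N| := abs_pos.mpr (hne N)
  have key : α / |θ N| > 2 * ε := by
    rw [gt_iff_lt, lt_div_iff₀ hθN]
    nlinarith
  have habs : |θ (N + 1)| ≥ α / |θ N| - |θ N| := by
    rw [hrec N]
    have this : |α / θ N| - |θ N| ≤ |θ N - α / θ N| := by
      have := abs_sub_abs_le_abs_sub (α / θ N) (θ N)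
      rwa [abs_sub_comm] at this
    rw [abs_div, abs_of_pos hα] at this
    linarith
  linarith
end
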